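/- Energy dissipation identity for perturbed plane-Poiseuille flow (equation (A.14)): Let α ∈ ℝ and ν > 0. Let φ : ℝ × ℝ → ℂ and v : ℝ × ℝ → ℝ be C^∞ functions of (t, y). Assume for all t ∈ ℝ: φ(t, 1) = φ(t, −1) = 0, ∂_yφ(t, 1) = ∂_yφ(t, −1) = 0, v(t, 1) = v(t, −1) = 0, and ∫_{−1}^{1} v(t, y) dy = 0. Assume φ satisfies the time-domain Orr–Sommerfeld equation ∂_t(∂_y²φ − α²φ) = ν·(∂_y² − α²)²φ − iα(1 − y²)(∂_y²φ − α²φ) − 2iα·φ for all t ∈ ℝ and y ∈ [−1, 1], and v satisfies the forced diffusion equation ∂_t v = ν·∂_y² v + 2α·∂_y( Im( conj(φ)·∂_yφ ) ) for all t ∈ ℝ and y ∈ [−1, 1]. Define E_φ(t) = ∫_{−1}^{1} ( |∂_yφ(t,y)|² + α²|φ(t,y)|² ) dy and δE_U(t) = ∫_{−1}^{1} (1 − y²)·v(t, y) dy. Then for every t ∈ ℝ, the function t ↦ E_φ(t) + δE_U(t) has derivative −2ν·∫_{−1}^{1} ( |∂_y²φ(t,y)|² + 2α²|∂_yφ(t,y)|²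 + α⁴|φ(t,y)|² ) dy at t, and this derivative is ≤ 0. -/

import Mathlib

open MeasureTheory

section PD
variable {E : Type*} [NormedAddCommGroup E] [NormedSpace ℝ E]

/-- Directional partial derivative of a function on `ℝ × ℝ`. -/
noncomputable def pd (w : ℝ × ℝ) (g : ℝ × ℝ → E) : ℝ × ℝ → E := fun p => fderiv ℝ g p w

lemma pd_contDiff {g : ℝ × ℝ → E} (hg : ContDiff ℝ (⊤ : ℕ∞) g) (w : ℝ × ℝ) :
    ContDiff ℝ (⊤ : ℕ∞) (pd w g) :=
  (ContinuousLinearMap.apply ℝ E w).contDiff.comp (hg.fderiv_right (by simp))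

lemma hasDerivAt_slice2 {g : ℝ × ℝ → E} (hg : ContDiff ℝ (⊤ : ℕ∞) g) (t y : ℝ) :
    HasDerivAt (fun z => g (t, z)) (pd (0, 1) g (t, y)) y := by
  have h1 : HasDerivAt (fun z : ℝ => ((t, z) : ℝ × ℝ)) ((0 : ℝ), (1 : ℝ)) y :=
    (hasDerivAt_const y t).prodMk (hasDerivAt_id y)
  have h2 : HasFDerivAt g (fderiv ℝ g (t, y)) (t, y) :=
    (hg.differentiable (by simp) (t, y)).hasFDerivAt
  exact h2.comp_hasDerivAt y h1

lemma hasDerivAt_slice1 {g : ℝ × ℝ → E} (hg : ContDiff ℝ (⊤ : ℕ∞) g) (t y : ℝ) :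
    HasDerivAt (fun s => g (s, y)) (pd (1, 0) g (t, y)) t := by
  have h1 : HasDerivAt (fun s : ℝ => ((s, y) : ℝ × ℝ)) ((1 : ℝ), (0 : ℝ)) t :=
    (hasDerivAt_id t).prodMk (hasDerivAt_const t y)
  have h2 : HasFDerivAt g (fderiv ℝ g (t, y)) (t, y) :=
    (hg.differentiable (by simp) (t, y)).hasFDerivAt
  exact h2.comp_hasDerivAt t h1

lemma pd_swap {g : ℝ × ℝ → E} (hg : ContDiff ℝ (⊤ : ℕ∞) g) :
    pd (1, 0) (pd (0, 1) g) = pd (0, 1) (pd (1, 0) g) := by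
  funext p
  have hdf : DifferentiableAt ℝ (fderiv ℝ g) p :=
    (hg.fderiv_right (m := (⊤ : ℕ∞)) ((by simp))).differentiable (by simp) |>.differentiableAt
  have key : ∀ w v : ℝ × ℝ, pd v (pd w g) p = fderiv ℝ (fderiv ℝ g) p v w := by
    intro w v
    have h1 : pd w g = fun q => (ContinuousLinearMap.apply ℝ E w) (fderiv ℝ g q) := rfl
    rw [h1]
    have hc : HasFDerivAt (fun q => (ContinuousLinearMap.apply ℝ E w) (fderiv ℝ g q))
        ((ContinuousLinearMap.apply ℝ E w).comp (fderiv ℝ (fderiv ℝ g) p)) p :=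
      ((ContinuousLinearMap.apply ℝ E w).hasFDerivAt).comp p hdf.hasFDerivAt
    have h2 : fderiv ℝ (fun q => (fderiv ℝ g q) w) p
        = (ContinuousLinearMap.apply ℝ E w).comp (fderiv ℝ (fderiv ℝ g) p) := hc.fderiv
    simp [pd, h2]
  have hsymm := (hg.contDiffAt (x := p)).isSymmSndFDerivAt (by rw [minSmoothness_of_isRCLikeNormedField]; exact WithTop.coe_le_coe.2 le_top)
  rw [key (0,1) (1,0), key (1,0) (0,1), hsymm (1,0) (0,1)]

end PD

lemma icc_int {E : Type*} [NormedAddCommGroup E] [NormedSpace ℝ E] (f : ℝ → E) :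
    ∫ y in Set.Icc (-1:ℝ) 1, f y = ∫ y in (-1:ℝ)..1, f y := by
  rw [intervalIntegral.integral_of_le (by norm_num : (-1:ℝ) ≤ 1),
    MeasureTheory.integral_Icc_eq_integral_Ioc]

lemma conj_mul_self (z : ℂ) : (starRingEnd ℂ) z * z = ((‖z‖ ^ 2 : ℝ) : ℂ) := by
  rw [mul_comm, Complex.mul_conj]
  norm_cast
  simp [Complex.sq_norm]

lemma normsq_eq (z : ℂ) : ‖z‖ ^ 2 = ((starRingEnd ℂ) z * z).re := by
  rw [mul_comm, Complex.mul_conj]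
  simp [Complex.sq_norm]

lemma hasDerivAt_normsq {c : ℝ → ℂ} {c' : ℂ} {x : ℝ} (h : HasDerivAt c c' x) :
    HasDerivAt (fun s => ‖c s‖ ^ 2) (2 * ((starRingEnd ℂ) (c x) * c').re) x := by
  have hre : HasDerivAt (fun s => (c s).re) (c'.re) x :=
    Complex.reCLM.hasFDerivAt.comp_hasDerivAt x h
  have him : HasDerivAt (fun s => (c s).im) (c'.im) x :=
    Complex.imCLM.hasFDerivAt.comp_hasDerivAt x h
  have h2 := (hre.fun_mul hre).fun_add (him.fun_mul him)
  have hfun : (fun s => ‖c s‖ ^ 2)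
      = fun s => (c s).re * (c s).re + (c s).im * (c s).im := by
    funext s
    rw [← Complex.normSq_apply, ← Complex.sq_norm]
  rw [hfun]
  refine h2.congr_deriv ?_
  simp [Complex.mul_re]
  ring

-- interval integration by parts, complex version with conjugated first factor
lemma ibp_conj (u v u' v' : ℝ → ℂ)
    (hu : ∀ y, HasDerivAt u (u' y) y) (hv : ∀ y, HasDerivAt v (v' y) y)
    (cu' : Continuous u') (cv' : Continuous v')
    (hb1 : u 1 = 0 ∨ v 1 = 0) (hb2 : u (-1) = 0 ∨ v (-1) = 0) :
    ∫ y in (-1:ℝ)..1, (starRingEnd ℂ) (u y) * v' y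
      = - ∫ y in (-1:ℝ)..1, (starRingEnd ℂ) (u' y) * v y := by
  have h := intervalIntegral.integral_mul_deriv_eq_deriv_mul (a := (-1:ℝ)) (b := (1:ℝ))
    (u := fun y => (starRingEnd ℂ) (u y)) (u' := fun y => (starRingEnd ℂ) (u' y))
    (v := v) (v' := v')
    (fun x _ => (hu x).star) (fun x _ => hv x)
    ((Complex.continuous_conj.comp cu').intervalIntegrable _ _)
    (cv'.intervalIntegrable _ _)
  have e1 : (starRingEnd ℂ) (u 1) * v 1 = 0 := by rcases hb1 with h1 | h1 <;> simp [h1]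
  have e2 : (starRingEnd ℂ) (u (-1)) * v (-1) = 0 := by rcases hb2 with h1 | h1 <;> simp [h1]
  rw [h, e1, e2]
  ring

-- interval integration by parts, real version
lemma ibp_real (u v u' v' : ℝ → ℝ)
    (hu : ∀ y, HasDerivAt u (u' y) y) (hv : ∀ y, HasDerivAt v (v' y) y)
    (cu' : Continuous u') (cv' : Continuous v')
    (hb1 : u 1 = 0 ∨ v 1 = 0) (hb2 : u (-1) = 0 ∨ v (-1) = 0) :
    ∫ y in (-1:ℝ)..1, u y * v' y = - ∫ y in (-1:ℝ)..1, u' y * v y := by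
  have h := intervalIntegral.integral_mul_deriv_eq_deriv_mul (a := (-1:ℝ)) (b := (1:ℝ))
    (u := u) (u' := u') (v := v) (v' := v')
    (fun x _ => hu x) (fun x _ => hv x)
    (cu'.intervalIntegrable _ _) (cv'.intervalIntegrable _ _)
  have e1 : u 1 * v 1 = 0 := by rcases hb1 with h1 | h1 <;> simp [h1]
  have e2 : u (-1) * v (-1) = 0 := by rcases hb2 with h1 | h1 <;> simp [h1]
  rw [h, e1, e2]
  ring

-- pull conj out of an interval integral
lemma intervalIntegral_conj {f : ℝ → ℂ} (hf : IntervalIntegrable f MeasureTheory.volume (-1) 1) :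
    ∫ y in (-1:ℝ)..1, (starRingEnd ℂ) (f y) = (starRingEnd ℂ) (∫ y in (-1:ℝ)..1, f y) :=
  (Complex.conjCLE.toContinuousLinearMap.intervalIntegral_comp_comm hf)

lemma intervalIntegral_re {f : ℝ → ℂ} (hf : IntervalIntegrable f MeasureTheory.volume (-1) 1) :
    ∫ y in (-1:ℝ)..1, (f y).re = (∫ y in (-1:ℝ)..1, f y).re :=
  (Complex.reCLM.intervalIntegral_comp_comm hf)

lemma intervalIntegral_ofReal {f : ℝ → ℝ}
    (hf : IntervalIntegrable f MeasureTheory.volume (-1) 1) :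
    ∫ y in (-1:ℝ)..1, ((f y : ℝ) : ℂ) = ((∫ y in (-1:ℝ)..1, f y : ℝ) : ℂ) := by
  have h := Complex.ofRealCLM.intervalIntegral_comp_comm hf
  simpa using h

lemma key_integral (α ν : ℝ)
    (a a1 a2 a3 a4 at0 at1 at2 : ℝ → ℂ) (b b1 b2 bt : ℝ → ℝ)
    (ha : ∀ y, HasDerivAt a (a1 y) y) (ha1 : ∀ y, HasDerivAt a1 (a2 y) y)
    (ha2 : ∀ y, HasDerivAt a2 (a3 y) y) (ha3 : ∀ y, HasDerivAt a3 (a4 y) y)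
    (hat : ∀ y, HasDerivAt at0 (at1 y) y) (hat1 : ∀ y, HasDerivAt at1 (at2 y) y)
    (hb : ∀ y, HasDerivAt b (b1 y) y) (hb1 : ∀ y, HasDerivAt b1 (b2 y) y)
    (ca4 : Continuous a4) (cat2 : Continuous at2) (cb2 : Continuous b2) (cbt : Continuous bt)
    (hba : a 1 = 0) (hba' : a (-1) = 0) (hba1 : a1 1 = 0) (hba1' : a1 (-1) = 0)
    (hbat : at0 1 = 0) (hbat' : at0 (-1) = 0)
    (hbb : b 1 = 0) (hbb' : b (-1) = 0)
    (hmass : ∫ y in Set.Icc (-1:ℝ) 1, b y = 0)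
    (hOS : ∀ y ∈ Set.Icc (-1:ℝ) 1, at2 y - (α:ℂ)^2 * at0 y
      = (ν:ℂ) * (a4 y - 2*(α:ℂ)^2*a2 y + (α:ℂ)^4*a y)
        - Complex.I*(α:ℂ)*(1-(y:ℂ)^2)*(a2 y - (α:ℂ)^2*a y) - 2*Complex.I*(α:ℂ)*a y)
    (hdiff : ∀ y ∈ Set.Icc (-1:ℝ) 1, bt y
      = ν * b2 y + 2*α*((starRingEnd ℂ) (a y) * a2 y).im) :
    ∫ y in Set.Icc (-1:ℝ) 1,
      (2*((starRingEnd ℂ) (a1 y) * at1 y).re + α^2*(2*((starRingEnd ℂ) (a y) * at0 y).re)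
        + (1-y^2)*bt y)
    = -(2*ν) * ∫ y in Set.Icc (-1:ℝ) 1, (‖a2 y‖^2 + 2*α^2*‖a1 y‖^2 + α^4*‖a y‖^2) := by
  have huIcc : Set.uIcc (-1:ℝ) 1 = Set.Icc (-1:ℝ) 1 := Set.uIcc_of_le (by norm_num)
  -- continuity of everything
  have ca : Continuous a := Differentiable.continuous (fun y => (ha y).differentiableAt : Differentiable ℝ a)
  have ca1 : Continuous a1 := Differentiable.continuous (fun y => (ha1 y).differentiableAt : Differentiable ℝ a1)
  have ca2 : Continuous a2 := Differentiable.continuous (fun y => (ha2 y).differentiableAt : Differentiable ℝ a2)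
  have ca3 : Continuous a3 := Differentiable.continuous (fun y => (ha3 y).differentiableAt : Differentiable ℝ a3)
  have cat0 : Continuous at0 := Differentiable.continuous (fun y => (hat y).differentiableAt : Differentiable ℝ at0)
  have cat1 : Continuous at1 := Differentiable.continuous (fun y => (hat1 y).differentiableAt : Differentiable ℝ at1)
  have cb : Continuous b := Differentiable.continuous (fun y => (hb y).differentiableAt : Differentiable ℝ b)
  have cb1 : Continuous b1 := Differentiable.continuous (fun y => (hb1 y).differentiableAt : Differentiable ℝ b1)
  have cK : ∀ {f g : ℝ → ℂ}, Continuous f → Continuous g →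
      Continuous (fun y => (starRingEnd ℂ) (f y) * g y) :=
    fun hf hg => (Complex.continuous_conj.comp hf).mul hg
  -- integration by parts steps
  have e1 : ∫ y in (-1:ℝ)..1, (starRingEnd ℂ) (a1 y) * at1 y
      = - ∫ y in (-1:ℝ)..1, (starRingEnd ℂ) (a2 y) * at0 y :=
    ibp_conj a1 at0 a2 at1 ha1 hat ca2 cat1 (Or.inl hba1) (Or.inl hba1')
  have e4a : ∫ y in (-1:ℝ)..1, (starRingEnd ℂ) (at0 y) * a2 y
      = - ∫ y in (-1:ℝ)..1, (starRingEnd ℂ) (at1 y) * a1 y :=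
    ibp_conj at0 a1 at1 a2 hat ha1 cat1 ca2 (Or.inl hbat) (Or.inl hbat')
  have e4b : ∫ y in (-1:ℝ)..1, (starRingEnd ℂ) (at1 y) * a1 y
      = - ∫ y in (-1:ℝ)..1, (starRingEnd ℂ) (at2 y) * a y :=
    ibp_conj at1 a at2 a1 hat1 ha cat2 ca1 (Or.inr hba) (Or.inr hba')
  have e8a : ∫ y in (-1:ℝ)..1, (starRingEnd ℂ) (a y) * a4 y
      = - ∫ y in (-1:ℝ)..1, (starRingEnd ℂ) (a1 y) * a3 y :=
    ibp_conj a a3 a1 a4 ha ha3 ca1 ca4 (Or.inl hba) (Or.inl hba')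
  have e8b : ∫ y in (-1:ℝ)..1, (starRingEnd ℂ) (a1 y) * a3 y
      = - ∫ y in (-1:ℝ)..1, (starRingEnd ℂ) (a2 y) * a2 y :=
    ibp_conj a1 a2 a2 a3 ha1 ha2 ca2 ca3 (Or.inl hba1) (Or.inl hba1')
  have e9 : ∫ y in (-1:ℝ)..1, (starRingEnd ℂ) (a y) * a2 y
      = - ∫ y in (-1:ℝ)..1, (starRingEnd ℂ) (a1 y) * a1 y :=
    ibp_conj a a1 a1 a2 ha ha1 ca1 ca2 (Or.inl hba) (Or.inl hba')
  -- real integration by parts for the mean-flow part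
  have hu12 : ∀ y : ℝ, HasDerivAt (fun z : ℝ => 1 - z ^ 2) (-(2 * y)) y := by
    intro y
    have := (hasDerivAt_pow 2 y).const_sub 1
    simpa using this
  have eb1 : ∫ y in (-1:ℝ)..1, (1 - y ^ 2) * b2 y
      = - ∫ y in (-1:ℝ)..1, (-(2 * y)) * b1 y :=
    ibp_real (fun z => 1 - z ^ 2) b1 (fun y => -(2 * y)) b2 hu12 hb1
      ((continuous_const.mul continuous_id).neg) cb2
      (Or.inl (by norm_num)) (Or.inl (by norm_num))
  have eb2 : ∫ y in (-1:ℝ)..1, (2 * y) * b1 y = - ∫ y in (-1:ℝ)..1, (2:ℝ) * b y :=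
    ibp_real (fun z => 2 * z) b (fun _ => (2:ℝ)) b1
      (fun y => by simpa using (hasDerivAt_id y).const_mul (2:ℝ)) hb
      continuous_const cb1 (Or.inr hbb) (Or.inr hbb')
  have hmass' : ∫ y in (-1:ℝ)..1, b y = 0 := by rw [← icc_int]; exact hmass
  have hIB : ∫ y in (-1:ℝ)..1, (1 - y ^ 2) * b2 y = 0 := by
    rw [eb1]
    have : ∫ y in (-1:ℝ)..1, (-(2 * y)) * b1 y = - ∫ y in (-1:ℝ)..1, (2 * y) * b1 y := by
      rw [← intervalIntegral.integral_neg]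
      apply intervalIntegral.integral_congr
      intro y _; ring
    rw [this, eb2, intervalIntegral.integral_const_mul, hmass']
    ring
  -- conjugation symmetry step
  have eU : (∫ y in (-1:ℝ)..1, (starRingEnd ℂ) (a2 y) * at0 y)
      = ∫ y in (-1:ℝ)..1, (starRingEnd ℂ) (a y) * at2 y := by
    have h1 : ∀ y : ℝ, (starRingEnd ℂ) (a2 y) * at0 y
        = (starRingEnd ℂ) ((starRingEnd ℂ) (at0 y) * a2 y) := fun y => by
      rw [map_mul, Complex.conj_conj, mul_comm]
    have h2 : ∀ y : ℝ, (starRingEnd ℂ) (a y) * at2 y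
        = (starRingEnd ℂ) ((starRingEnd ℂ) (at2 y) * a y) := fun y => by
      rw [map_mul, Complex.conj_conj, mul_comm]
    simp only [h1, h2]
    rw [intervalIntegral_conj ((cK cat0 ca2).intervalIntegrable _ _),
      intervalIntegral_conj ((cK cat2 ca).intervalIntegrable _ _), e4a, e4b, neg_neg]
  -- abbreviations for the real integrals
  set r2 : ℝ := ∫ y in (-1:ℝ)..1, ‖a2 y‖ ^ 2 with hr2
  set r1 : ℝ := ∫ y in (-1:ℝ)..1, ‖a1 y‖ ^ 2 with hr1
  set r0 : ℝ := ∫ y in (-1:ℝ)..1, ‖a y‖ ^ 2 with hr0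
  set IC : ℝ := ∫ y in (-1:ℝ)..1, (1 - y ^ 2) * ((starRingEnd ℂ) (a y) * a2 y).im with hIC
  -- values of the basic complex integrals
  have hS4 : ∫ y in (-1:ℝ)..1, (starRingEnd ℂ) (a y) * a4 y = ((r2 : ℝ) : ℂ) := by
    rw [e8a, e8b, neg_neg]
    have h : ∀ y : ℝ, (starRingEnd ℂ) (a2 y) * a2 y = ((‖a2 y‖ ^ 2 : ℝ) : ℂ) :=
      fun y => conj_mul_self _
    simp only [h]
    rw [intervalIntegral_ofReal ((ca2.norm.fun_pow 2).intervalIntegrable _ _)]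
  have hS2 : ∫ y in (-1:ℝ)..1, (starRingEnd ℂ) (a y) * a2 y = -((r1 : ℝ) : ℂ) := by
    rw [e9]
    have h : ∀ y : ℝ, (starRingEnd ℂ) (a1 y) * a1 y = ((‖a1 y‖ ^ 2 : ℝ) : ℂ) :=
      fun y => conj_mul_self _
    simp only [h]
    rw [intervalIntegral_ofReal ((ca1.norm.fun_pow 2).intervalIntegrable _ _)]
  -- the key complex integral X
  set X : ℂ := ∫ y in (-1:ℝ)..1, (starRingEnd ℂ) (a y) * (at2 y - (α:ℂ)^2 * at0 y) with hX
  have h4r : ∫ y in (-1:ℝ)..1, ((starRingEnd ℂ) (a y) * a4 y).re = r2 := by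
    rw [intervalIntegral_re ((cK ca ca4).intervalIntegrable _ _), hS4, Complex.ofReal_re]
  have h2r : ∫ y in (-1:ℝ)..1, ((starRingEnd ℂ) (a y) * a2 y).re = -r1 := by
    rw [intervalIntegral_re ((cK ca ca2).intervalIntegrable _ _), hS2]
    simp
  have hXre : X.re = ν * r2 - 2 * α^2 * ν * (-r1) + α^4 * ν * r0 + α * IC := by
    have hXcongr : X = ∫ y in (-1:ℝ)..1, (starRingEnd ℂ) (a y) *
        ((ν:ℂ) * (a4 y - 2*(α:ℂ)^2*a2 y + (α:ℂ)^4*a y)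
          - Complex.I*(α:ℂ)*(1-(y:ℂ)^2)*(a2 y - (α:ℂ)^2*a y) - 2*Complex.I*(α:ℂ)*a y) := by
      rw [hX]
      apply intervalIntegral.integral_congr
      intro y hy
      rw [huIcc] at hy
      show (starRingEnd ℂ) (a y) * (at2 y - (α:ℂ)^2 * at0 y) = _
      rw [hOS y hy]
    have hcont2 : Continuous (fun y : ℝ => (starRingEnd ℂ) (a y) *
        ((ν:ℂ) * (a4 y - 2*(α:ℂ)^2*a2 y + (α:ℂ)^4*a y)
          - Complex.I*(α:ℂ)*(1-(y:ℂ)^2)*(a2 y - (α:ℂ)^2*a y) - 2*Complex.I*(α:ℂ)*a y)) := by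
      apply (Complex.continuous_conj.comp ca).mul
      refine Continuous.sub (Continuous.sub ?_ ?_) ?_
      · exact continuous_const.mul ((ca4.sub (continuous_const.mul ca2)).add
          (continuous_const.mul ca))
      · exact (continuous_const.mul (continuous_const.sub
          ((Complex.continuous_ofReal.comp continuous_id).pow 2))).mul
          (ca2.sub (continuous_const.mul ca))
      · exact continuous_const.mul ca
    have hre : X.re = ∫ y in (-1:ℝ)..1, ((starRingEnd ℂ) (a y) *
        ((ν:ℂ) * (a4 y - 2*(α:ℂ)^2*a2 y + (α:ℂ)^4*a y)
          - Complex.I*(α:ℂ)*(1-(y:ℂ)^2)*(a2 y - (α:ℂ)^2*a y) - 2*Complex.I*(α:ℂ)*a y)).re := by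
      rw [hXcongr, ← intervalIntegral_re (hcont2.intervalIntegrable _ _)]
    have hpt : ∀ y : ℝ, ((starRingEnd ℂ) (a y) *
        ((ν:ℂ) * (a4 y - 2*(α:ℂ)^2*a2 y + (α:ℂ)^4*a y)
          - Complex.I*(α:ℂ)*(1-(y:ℂ)^2)*(a2 y - (α:ℂ)^2*a y) - 2*Complex.I*(α:ℂ)*a y)).re
        = ν * ((starRingEnd ℂ) (a y) * a4 y).re
          - 2 * α^2 * ν * ((starRingEnd ℂ) (a y) * a2 y).re
          + α^4 * ν * ‖a y‖ ^ 2
          + α * ((1 - y^2) * ((starRingEnd ℂ) (a y) * a2 y).im) := by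
      intro y
      rw [normsq_eq (a y)]
      rw [show ((α:ℂ))^2 = ((α^2 : ℝ) : ℂ) by push_cast; ring,
        show ((α:ℂ))^4 = ((α^4 : ℝ) : ℂ) by push_cast; ring,
        show (1 - (y:ℂ)^2) = ((1 - y^2 : ℝ) : ℂ) by push_cast; ring,
        show (2 : ℂ) = ((2:ℝ) : ℂ) by norm_num]
      simp only [Complex.mul_re, Complex.mul_im, Complex.sub_re, Complex.sub_im,
        Complex.add_re, Complex.add_im, Complex.I_re, Complex.I_im, Complex.ofReal_re,
        Complex.ofReal_im, Complex.conj_re, Complex.conj_im]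
      ring
    have c1 : Continuous fun y : ℝ => ((starRingEnd ℂ) (a y) * a4 y).re :=
      Complex.continuous_re.comp (cK ca ca4)
    have c2 : Continuous fun y : ℝ => ((starRingEnd ℂ) (a y) * a2 y).re :=
      Complex.continuous_re.comp (cK ca ca2)
    have c0 : Continuous fun y : ℝ => ‖a y‖ ^ 2 := (ca.norm.pow 2)
    have cic : Continuous fun y : ℝ => (1 - y^2) * ((starRingEnd ℂ) (a y) * a2 y).im :=
      ((continuous_const.sub (continuous_id.pow 2)).mul
        (Complex.continuous_im.comp (cK ca ca2)))
    have hsplit : (∫ y in (-1:ℝ)..1, (ν * ((starRingEnd ℂ) (a y) * a4 y).re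
          - 2 * α^2 * ν * ((starRingEnd ℂ) (a y) * a2 y).re
          + α^4 * ν * ‖a y‖ ^ 2
          + α * ((1 - y^2) * ((starRingEnd ℂ) (a y) * a2 y).im)))
        = ν * (∫ y in (-1:ℝ)..1, ((starRingEnd ℂ) (a y) * a4 y).re)
          - 2 * α^2 * ν * (∫ y in (-1:ℝ)..1, ((starRingEnd ℂ) (a y) * a2 y).re)
          + α^4 * ν * r0 + α * IC := by
      rw [intervalIntegral.integral_add
          (((((continuous_const.fun_mul c1).fun_sub (continuous_const.fun_mul c2)).fun_add
            (continuous_const.fun_mul c0))).intervalIntegrable _ _)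
          ((continuous_const.fun_mul cic).intervalIntegrable _ _),
        intervalIntegral.integral_add
          ((((continuous_const.fun_mul c1).fun_sub (continuous_const.fun_mul c2))).intervalIntegrable _ _)
          ((continuous_const.fun_mul c0).intervalIntegrable _ _),
        intervalIntegral.integral_sub
          ((continuous_const.fun_mul c1).intervalIntegrable _ _)
          ((continuous_const.fun_mul c2).intervalIntegrable _ _),
        intervalIntegral.integral_const_mul, intervalIntegral.integral_const_mul,
        intervalIntegral.integral_const_mul, intervalIntegral.integral_const_mul]
    have hcongr2 : Set.EqOn (fun y : ℝ => ((starRingEnd ℂ) (a y) *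
        ((ν:ℂ) * (a4 y - 2*(α:ℂ)^2*a2 y + (α:ℂ)^4*a y)
          - Complex.I*(α:ℂ)*(1-(y:ℂ)^2)*(a2 y - (α:ℂ)^2*a y) - 2*Complex.I*(α:ℂ)*a y)).re)
        (fun y : ℝ => ν * ((starRingEnd ℂ) (a y) * a4 y).re
          - 2 * α^2 * ν * ((starRingEnd ℂ) (a y) * a2 y).re
          + α^4 * ν * ‖a y‖ ^ 2
          + α * ((1 - y^2) * ((starRingEnd ℂ) (a y) * a2 y).im))
        (Set.uIcc (-1:ℝ) 1) := fun y _ => hpt y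
    rw [hre, intervalIntegral.integral_congr hcongr2, hsplit, h4r, h2r]
  -- the perturbation-energy part of the integral
  have hIAval : (∫ y in (-1:ℝ)..1, (2*((starRingEnd ℂ) (a1 y) * at1 y).re
      + α^2*(2*((starRingEnd ℂ) (a y) * at0 y).re))) = -2 * X.re := by
    have hpt2 : ∀ y : ℝ, 2*((starRingEnd ℂ) (a1 y) * at1 y).re
        + α^2*(2*((starRingEnd ℂ) (a y) * at0 y).re)
        = ((2:ℂ)*((starRingEnd ℂ) (a1 y) * at1 y)
            + (α:ℂ)^2*((2:ℂ)*((starRingEnd ℂ) (a y) * at0 y))).re := by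
      intro y
      rw [show ((α:ℂ))^2 = ((α^2 : ℝ) : ℂ) by push_cast; ring,
        show (2 : ℂ) = ((2:ℝ) : ℂ) by norm_num]
      simp only [Complex.add_re, Complex.mul_re, Complex.ofReal_re, Complex.ofReal_im]
      ring
    have hfc : Continuous (fun y : ℝ => (2:ℂ)*((starRingEnd ℂ) (a1 y) * at1 y)
        + (α:ℂ)^2*((2:ℂ)*((starRingEnd ℂ) (a y) * at0 y))) :=
      (continuous_const.mul (cK ca1 cat1)).add
        (continuous_const.mul (continuous_const.mul (cK ca cat0)))
    have hcongr3 : Set.EqOn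
        (fun y : ℝ => 2*((starRingEnd ℂ) (a1 y) * at1 y).re
          + α^2*(2*((starRingEnd ℂ) (a y) * at0 y).re))
        (fun y : ℝ => ((2:ℂ)*((starRingEnd ℂ) (a1 y) * at1 y)
          + (α:ℂ)^2*((2:ℂ)*((starRingEnd ℂ) (a y) * at0 y))).re)
        (Set.uIcc (-1:ℝ) 1) := fun y _ => hpt2 y
    rw [intervalIntegral.integral_congr hcongr3,
      intervalIntegral_re (hfc.intervalIntegrable _ _)]
    have hint : ∫ y in (-1:ℝ)..1, ((2:ℂ)*((starRingEnd ℂ) (a1 y) * at1 y)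
        + (α:ℂ)^2*((2:ℂ)*((starRingEnd ℂ) (a y) * at0 y))) = -2 * X := by
      rw [intervalIntegral.integral_add
          ((continuous_const.fun_mul (cK ca1 cat1)).intervalIntegrable _ _)
          ((continuous_const.fun_mul (continuous_const.fun_mul (cK ca cat0))).intervalIntegrable _ _),
        intervalIntegral.integral_const_mul, intervalIntegral.integral_const_mul,
        intervalIntegral.integral_const_mul, e1, eU]
      have hXsplit : X = (∫ y in (-1:ℝ)..1, (starRingEnd ℂ) (a y) * at2 y)
          - (α:ℂ)^2 * ∫ y in (-1:ℝ)..1, (starRingEnd ℂ) (a y) * at0 y := by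
        rw [hX]
        have hptX : Set.EqOn
            (fun y : ℝ => (starRingEnd ℂ) (a y) * (at2 y - (α:ℂ)^2 * at0 y))
            (fun y : ℝ => (starRingEnd ℂ) (a y) * at2 y
              - (α:ℂ)^2 * ((starRingEnd ℂ) (a y) * at0 y)) (Set.uIcc (-1:ℝ) 1) :=
          fun y _ => by ring
        rw [intervalIntegral.integral_congr hptX,
          intervalIntegral.integral_sub ((cK ca cat2).intervalIntegrable _ _)
            ((continuous_const.fun_mul (cK ca cat0)).intervalIntegrable _ _),
          intervalIntegral.integral_const_mul]
      rw [hXsplit]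
      ring
    rw [hint]
    simp [Complex.mul_re]
  -- final assembly
  rw [icc_int, icc_int]
  have hLcongr : Set.EqOn
      (fun y : ℝ => 2*((starRingEnd ℂ) (a1 y) * at1 y).re
        + α^2*(2*((starRingEnd ℂ) (a y) * at0 y).re) + (1 - y^2)*bt y)
      (fun y : ℝ => (2*((starRingEnd ℂ) (a1 y) * at1 y).re
        + α^2*(2*((starRingEnd ℂ) (a y) * at0 y).re))
        + (ν * ((1 - y^2) * b2 y)
          + 2 * α * ((1 - y^2) * ((starRingEnd ℂ) (a y) * a2 y).im)))
      (Set.uIcc (-1:ℝ) 1) := by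
    intro y hy
    rw [huIcc] at hy
    simp only
    rw [hdiff y hy]
    ring
  have cA : Continuous (fun y : ℝ => 2*((starRingEnd ℂ) (a1 y) * at1 y).re
      + α^2*(2*((starRingEnd ℂ) (a y) * at0 y).re)) :=
    (continuous_const.mul (Complex.continuous_re.comp (cK ca1 cat1))).add
      (continuous_const.mul (continuous_const.mul
        (Complex.continuous_re.comp (cK ca cat0))))
  have cB2 : Continuous (fun y : ℝ => (1 - y^2) * b2 y) :=
    (continuous_const.sub (continuous_id.pow 2)).mul cb2
  have cIC : Continuous (fun y : ℝ => (1 - y^2) * ((starRingEnd ℂ) (a y) * a2 y).im) :=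
    (continuous_const.sub (continuous_id.pow 2)).mul
      (Complex.continuous_im.comp (cK ca ca2))
  rw [intervalIntegral.integral_congr hLcongr,
    intervalIntegral.integral_add (cA.intervalIntegrable _ _)
      (((continuous_const.fun_mul cB2).fun_add (continuous_const.fun_mul cIC)).intervalIntegrable _ _),
    intervalIntegral.integral_add ((continuous_const.fun_mul cB2).intervalIntegrable _ _)
      ((continuous_const.fun_mul cIC).intervalIntegrable _ _),
    intervalIntegral.integral_const_mul, intervalIntegral.integral_const_mul,
    hIAval, hXre, hIB]
  have hRHS : ∫ y in (-1:ℝ)..1, (‖a2 y‖^2 + 2*α^2*‖a1 y‖^2 + α^4*‖a y‖^2)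
      = r2 + 2*α^2*r1 + α^4*r0 := by
    rw [intervalIntegral.integral_add
        (((ca2.norm.fun_pow 2).fun_add (continuous_const.fun_mul (ca1.norm.fun_pow 2))).intervalIntegrable _ _)
        ((continuous_const.fun_mul (ca.norm.fun_pow 2)).intervalIntegrable _ _),
      intervalIntegral.integral_add ((ca2.norm.fun_pow 2).intervalIntegrable _ _)
        ((continuous_const.fun_mul (ca1.norm.fun_pow 2)).intervalIntegrable _ _),
      intervalIntegral.integral_const_mul, intervalIntegral.integral_const_mul]
  rw [hRHS]
  ring

/-- Energy dissipation identity for perturbed plane-Poiseuille flow (equation (A.14)):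
under the time-domain Orr–Sommerfeld equation for the stream-function amplitude `φ`,
the forced diffusion equation for the mean-flow modification `v`, no-slip boundary
conditions and zero net mass flux, the total second-order energy `E_φ + δE_U` has
derivative `-2ν ∫ (|∂_y²φ|² + 2α²|∂_yφ|² + α⁴|φ|²) dy ≤ 0` at every time. -/
theorem ppf_energy_dissipation (α ν : ℝ) (hν : 0 < ν)
    (φ : ℝ → ℝ → ℂ) (v : ℝ → ℝ → ℝ)
    (hφ : ContDiff ℝ (⊤ : ℕ∞) (Function.uncurry φ))
    (hv : ContDiff ℝ (⊤ : ℕ∞) (Function.uncurry v))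
    (hbc1 : ∀ t : ℝ, φ t 1 = 0) (hbc2 : ∀ t : ℝ, φ t (-1) = 0)
    (hbc3 : ∀ t : ℝ, deriv (φ t) 1 = 0) (hbc4 : ∀ t : ℝ, deriv (φ t) (-1) = 0)
    (hbv1 : ∀ t : ℝ, v t 1 = 0) (hbv2 : ∀ t : ℝ, v t (-1) = 0)
    (hmass : ∀ t : ℝ, ∫ y in Set.Icc (-1 : ℝ) 1, v t y = 0)
    (hOS : ∀ t : ℝ, ∀ y ∈ Set.Icc (-1 : ℝ) 1,
      deriv (fun s => deriv (deriv (φ s)) y - (α : ℂ) ^ 2 * φ s y) t =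
        (ν : ℂ) * (deriv^[4] (φ t) y - 2 * (α : ℂ) ^ 2 * deriv (deriv (φ t)) y
            + (α : ℂ) ^ 4 * φ t y)
          - Complex.I * (α : ℂ) * (1 - (y : ℂ) ^ 2)
            * (deriv (deriv (φ t)) y - (α : ℂ) ^ 2 * φ t y)
          - 2 * Complex.I * (α : ℂ) * φ t y)
    (hdiff : ∀ t : ℝ, ∀ y ∈ Set.Icc (-1 : ℝ) 1,
      deriv (fun s => v s y) t =
        ν * deriv (deriv (v t)) y
          + 2 * α * deriv (fun y' => ((starRingEnd ℂ) (φ t y') * deriv (φ t) y').im) y) :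
    ∀ t : ℝ,
      HasDerivAt (fun s =>
          (∫ y in Set.Icc (-1 : ℝ) 1, (‖deriv (φ s) y‖ ^ 2 + α ^ 2 * ‖φ s y‖ ^ 2))
          + ∫ y in Set.Icc (-1 : ℝ) 1, (1 - y ^ 2) * v s y)
        (-(2 * ν) * ∫ y in Set.Icc (-1 : ℝ) 1,
          (‖deriv (deriv (φ t)) y‖ ^ 2 + 2 * α ^ 2 * ‖deriv (φ t) y‖ ^ 2
            + α ^ 4 * ‖φ t y‖ ^ 2)) t
      ∧ (-(2 * ν) * ∫ y in Set.Icc (-1 : ℝ) 1,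
          (‖deriv (deriv (φ t)) y‖ ^ 2 + 2 * α ^ 2 * ‖deriv (φ t) y‖ ^ 2
            + α ^ 4 * ‖φ t y‖ ^ 2)) ≤ 0 := by
  intro t
  -- smoothness of the iterated partial derivatives
  have hF1 : ContDiff ℝ (⊤ : ℕ∞) (pd (0,1) (Function.uncurry φ)) := pd_contDiff hφ _
  have hF2 : ContDiff ℝ (⊤ : ℕ∞) (pd (0,1) (pd (0,1) (Function.uncurry φ))) := pd_contDiff hF1 _
  have hF3 : ContDiff ℝ (⊤ : ℕ∞) (pd (0,1) (pd (0,1) (pd (0,1) (Function.uncurry φ)))) := pd_contDiff hF2 _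
  have hF4 : ContDiff ℝ (⊤ : ℕ∞) (pd (0,1) (pd (0,1) (pd (0,1) (pd (0,1) (Function.uncurry φ))))) := pd_contDiff hF3 _
  have hT0 : ContDiff ℝ (⊤ : ℕ∞) (pd (1,0) (Function.uncurry φ)) := pd_contDiff hφ _
  have hT1 : ContDiff ℝ (⊤ : ℕ∞) (pd (1,0) (pd (0,1) (Function.uncurry φ))) := pd_contDiff hF1 _
  have hT2 : ContDiff ℝ (⊤ : ℕ∞) (pd (1,0) (pd (0,1) (pd (0,1) (Function.uncurry φ)))) := pd_contDiff hF2 _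
  have hV1 : ContDiff ℝ (⊤ : ℕ∞) (pd (0,1) (Function.uncurry v)) := pd_contDiff hv _
  have hV2 : ContDiff ℝ (⊤ : ℕ∞) (pd (0,1) (pd (0,1) (Function.uncurry v))) := pd_contDiff hV1 _
  have hW1 : ContDiff ℝ (⊤ : ℕ∞) (pd (1,0) (Function.uncurry v)) := pd_contDiff hv _
  -- spatial derivatives of φ in terms of pd
  have r1 : ∀ s y : ℝ, deriv (φ s) y = (pd (0,1) (Function.uncurry φ)) (s, y) :=
    fun s y => (hasDerivAt_slice2 hφ s y).deriv
  have e1φ : ∀ s : ℝ, deriv (φ s) = fun y => (pd (0,1) (Function.uncurry φ)) (s, y) := fun s => funext (r1 s)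
  have r2 : ∀ s y : ℝ, deriv (deriv (φ s)) y = (pd (0,1) (pd (0,1) (Function.uncurry φ))) (s, y) := by
    intro s y
    rw [e1φ s]
    exact (hasDerivAt_slice2 hF1 s y).deriv
  have e2φ : ∀ s : ℝ, deriv (deriv (φ s)) = fun y => (pd (0,1) (pd (0,1) (Function.uncurry φ))) (s, y) := fun s => funext (r2 s)
  have r3 : ∀ s y : ℝ, deriv (deriv (deriv (φ s))) y = (pd (0,1) (pd (0,1) (pd (0,1) (Function.uncurry φ)))) (s, y) := by
    intro s y
    rw [e2φ s]
    exact (hasDerivAt_slice2 hF2 s y).deriv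
  have e3φ : ∀ s : ℝ, deriv (deriv (deriv (φ s))) = fun y => (pd (0,1) (pd (0,1) (pd (0,1) (Function.uncurry φ)))) (s, y) :=
    fun s => funext (r3 s)
  have r4 : ∀ s y : ℝ, deriv^[4] (φ s) y = (pd (0,1) (pd (0,1) (pd (0,1) (pd (0,1) (Function.uncurry φ))))) (s, y) := by
    intro s y
    rw [show (4:ℕ) = 3+1 from rfl, Function.iterate_succ_apply',
      show (3:ℕ) = 2+1 from rfl, Function.iterate_succ_apply',
      show (2:ℕ) = 1+1 from rfl, Function.iterate_succ_apply', Function.iterate_one]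
    rw [e3φ s]
    exact (hasDerivAt_slice2 hF3 s y).deriv
  -- boundary values of the time derivative of φ
  have hbdT0 : ∀ (s c : ℝ), φ t c = 0 → (∀ s' : ℝ, φ s' c = 0) → (pd (1,0) (Function.uncurry φ)) (s, c) = 0 := by
    intro s c _ hall
    have h := hasDerivAt_slice1 hφ s c
    have h2 : (fun s' : ℝ => (Function.uncurry φ) (s', c)) = fun _ : ℝ => (0:ℂ) :=
      funext fun s' => hall s'
    rw [h2] at h
    exact h.unique (hasDerivAt_const s 0)
  -- time derivative facts for the Orr-Sommerfeld substitution
  have hOS' : ∀ y ∈ Set.Icc (-1:ℝ) 1,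
      (pd (1,0) (pd (0,1) (pd (0,1) (Function.uncurry φ)))) (t, y) - (α:ℂ)^2 * (pd (1,0) (Function.uncurry φ)) (t, y)
      = (ν:ℂ) * ((pd (0,1) (pd (0,1) (pd (0,1) (pd (0,1) (Function.uncurry φ))))) (t, y) - 2*(α:ℂ)^2*(pd (0,1) (pd (0,1) (Function.uncurry φ))) (t, y) + (α:ℂ)^4*φ t y)
        - Complex.I*(α:ℂ)*(1-(y:ℂ)^2)*((pd (0,1) (pd (0,1) (Function.uncurry φ))) (t, y) - (α:ℂ)^2*φ t y)
        - 2*Complex.I*(α:ℂ)*φ t y := by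
    intro y hy
    have h0 := hOS t y hy
    have hfun : (fun s => deriv (deriv (φ s)) y - (α : ℂ) ^ 2 * φ s y)
        = fun s => (pd (0,1) (pd (0,1) (Function.uncurry φ))) (s, y) - (α:ℂ)^2 * (Function.uncurry φ) (s, y) :=
      funext fun s => by rw [r2 s y]; exact rfl
    rw [hfun] at h0
    have hdAt : HasDerivAt (fun s => (pd (0,1) (pd (0,1) (Function.uncurry φ))) (s, y) - (α:ℂ)^2 * (Function.uncurry φ) (s, y))
        ((pd (1,0) (pd (0,1) (pd (0,1) (Function.uncurry φ)))) (t, y) - (α:ℂ)^2 * (pd (1,0) (Function.uncurry φ)) (t, y)) t :=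
      (hasDerivAt_slice1 hF2 t y).sub ((hasDerivAt_slice1 hφ t y).const_mul ((α:ℂ)^2))
    rw [hdAt.deriv] at h0
    rw [h0, r4 t y, r2 t y]
  -- diffusion equation substitution
  have hdiff' : ∀ y ∈ Set.Icc (-1:ℝ) 1,
      (pd (1,0) (Function.uncurry v)) (t, y) = ν * (pd (0,1) (pd (0,1) (Function.uncurry v))) (t, y)
        + 2 * α * ((starRingEnd ℂ) (φ t y) * (pd (0,1) (pd (0,1) (Function.uncurry φ))) (t, y)).im := by
    intro y hy
    have h0 := hdiff t y hy
    have hL : deriv (fun s => v s y) t = (pd (1,0) (Function.uncurry v)) (t, y) := (hasDerivAt_slice1 hv t y).deriv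
    have rv1 : ∀ z : ℝ, deriv (v t) z = (pd (0,1) (Function.uncurry v)) (t, z) :=
      fun z => (hasDerivAt_slice2 hv t z).deriv
    have rv2 : deriv (deriv (v t)) y = (pd (0,1) (pd (0,1) (Function.uncurry v))) (t, y) := by
      rw [funext rv1]
      exact (hasDerivAt_slice2 hV1 t y).deriv
    have hwfun : (fun y' => ((starRingEnd ℂ) (φ t y') * deriv (φ t) y').im)
        = fun y' => ((starRingEnd ℂ) ((Function.uncurry φ) (t, y')) * (pd (0,1) (Function.uncurry φ)) (t, y')).im :=
      funext fun y' => by rw [r1 t y']; exact rfl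
    have hprod : HasDerivAt (fun y' => (starRingEnd ℂ) ((Function.uncurry φ) (t, y')) * (pd (0,1) (Function.uncurry φ)) (t, y'))
        ((starRingEnd ℂ) ((pd (0,1) (Function.uncurry φ)) (t, y)) * (pd (0,1) (Function.uncurry φ)) (t, y)
          + (starRingEnd ℂ) ((Function.uncurry φ) (t, y)) * (pd (0,1) (pd (0,1) (Function.uncurry φ))) (t, y)) y :=
      ((hasDerivAt_slice2 hφ t y).star).mul (hasDerivAt_slice2 hF1 t y)
    have him : HasDerivAt (fun y' => ((starRingEnd ℂ) ((Function.uncurry φ) (t, y')) * (pd (0,1) (Function.uncurry φ)) (t, y')).im)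
        (((starRingEnd ℂ) ((pd (0,1) (Function.uncurry φ)) (t, y)) * (pd (0,1) (Function.uncurry φ)) (t, y)
          + (starRingEnd ℂ) ((Function.uncurry φ) (t, y)) * (pd (0,1) (pd (0,1) (Function.uncurry φ))) (t, y)).im) y :=
      Complex.imCLM.hasFDerivAt.comp_hasDerivAt y hprod
    have hzero : ((starRingEnd ℂ) ((pd (0,1) (Function.uncurry φ)) (t, y)) * (pd (0,1) (Function.uncurry φ)) (t, y)).im = 0 := by
      rw [mul_comm, Complex.mul_conj]
      simp
    rw [hwfun, him.deriv, Complex.add_im, hzero, zero_add] at h0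
    rw [← hL, ← rv2]
    exact h0
  -- the integrand and its time derivative
  have hFd : ∀ s y : ℝ, HasDerivAt
      (fun s' => ‖(pd (0,1) (Function.uncurry φ)) (s', y)‖ ^ 2 + α ^ 2 * ‖φ s' y‖ ^ 2 + (1 - y ^ 2) * v s' y)
      (2*((starRingEnd ℂ) ((pd (0,1) (Function.uncurry φ)) (s, y)) * (pd (1,0) (pd (0,1) (Function.uncurry φ))) (s, y)).re
        + α^2*(2*((starRingEnd ℂ) ((Function.uncurry φ) (s, y)) * (pd (1,0) (Function.uncurry φ)) (s, y)).re)
        + (1 - y^2) * (pd (1,0) (Function.uncurry v)) (s, y)) s := by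
    intro s y
    have h1 := hasDerivAt_normsq (hasDerivAt_slice1 hF1 s y)
    have h2 := (hasDerivAt_normsq (hasDerivAt_slice1 hφ s y)).const_mul (α^2)
    have h3 := (hasDerivAt_slice1 hv s y).const_mul (1 - y^2)
    exact (h1.add h2).add h3
  -- continuity of the time derivative integrand
  have hGcont : Continuous (fun p : ℝ × ℝ =>
      2*((starRingEnd ℂ) ((pd (0,1) (Function.uncurry φ)) p) * (pd (1,0) (pd (0,1) (Function.uncurry φ))) p).re
        + α^2*(2*((starRingEnd ℂ) ((Function.uncurry φ) p) * (pd (1,0) (Function.uncurry φ)) p).re)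
        + (1 - p.2^2) * (pd (1,0) (Function.uncurry v)) p) := by
    have c1 : Continuous (pd (0,1) (Function.uncurry φ)) := hF1.continuous
    have c2 : Continuous (pd (1,0) (pd (0,1) (Function.uncurry φ))) := hT1.continuous
    have c3 : Continuous (Function.uncurry φ) := hφ.continuous
    have c4 : Continuous (pd (1,0) (Function.uncurry φ)) := hT0.continuous
    have c5 : Continuous (pd (1,0) (Function.uncurry v)) := hW1.continuous
    exact ((continuous_const.mul (Complex.continuous_re.comp
        ((Complex.continuous_conj.comp c1).mul c2))).add
      (continuous_const.mul (continuous_const.mul (Complex.continuous_re.comp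
        ((Complex.continuous_conj.comp c3).mul c4))))).add
      (((continuous_const.sub ((continuous_snd).pow 2))).mul c5)
  -- a uniform bound on a compact neighbourhood
  obtain ⟨C, hC⟩ := (IsCompact.prod (isCompact_Icc (a := t - 1) (b := t + 1))
      (isCompact_Icc (a := (-1:ℝ)) (b := 1))).exists_bound_of_continuousOn
      hGcont.continuousOn
  -- slice continuity
  have hFscont : ∀ s : ℝ, Continuous (fun y =>
      ‖(pd (0,1) (Function.uncurry φ)) (s, y)‖ ^ 2 + α ^ 2 * ‖φ s y‖ ^ 2 + (1 - y ^ 2) * v s y) := by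
    intro s
    have hline : Continuous (fun y : ℝ => ((s, y) : ℝ × ℝ)) :=
      continuous_const.prodMk continuous_id
    exact (((hF1.continuous.comp hline).norm.pow 2).add
      (continuous_const.mul ((hφ.continuous.comp hline).norm.pow 2))).add
      ((continuous_const.sub ((continuous_id).pow 2)).mul (hv.continuous.comp hline))
  have hGscont : ∀ s : ℝ, Continuous (fun y =>
      2*((starRingEnd ℂ) ((pd (0,1) (Function.uncurry φ)) (s, y)) * (pd (1,0) (pd (0,1) (Function.uncurry φ))) (s, y)).re
        + α^2*(2*((starRingEnd ℂ) ((Function.uncurry φ) (s, y)) * (pd (1,0) (Function.uncurry φ)) (s, y)).re)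
        + (1 - y^2) * (pd (1,0) (Function.uncurry v)) (s, y)) := by
    intro s
    have hline : Continuous (fun y : ℝ => ((s, y) : ℝ × ℝ)) :=
      continuous_const.prodMk continuous_id
    exact ((continuous_const.mul (Complex.continuous_re.comp
        ((Complex.continuous_conj.comp (hF1.continuous.comp hline)).mul
          (hT1.continuous.comp hline)))).add
      (continuous_const.mul (continuous_const.mul (Complex.continuous_re.comp
        ((Complex.continuous_conj.comp (hφ.continuous.comp hline)).mul
          (hT0.continuous.comp hline)))))).add
      ((continuous_const.sub ((continuous_id).pow 2)).mul (hW1.continuous.comp hline))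
  -- differentiation under the integral sign
  have hDUI := hasDerivAt_integral_of_dominated_loc_of_deriv_le
    (μ := MeasureTheory.volume.restrict (Set.Icc (-1:ℝ) 1)) (x₀ := t) (s := Metric.ball t 1)
    (F := fun s y => ‖(pd (0,1) (Function.uncurry φ)) (s, y)‖ ^ 2 + α ^ 2 * ‖φ s y‖ ^ 2 + (1 - y ^ 2) * v s y)
    (F' := fun s y => 2*((starRingEnd ℂ) ((pd (0,1) (Function.uncurry φ)) (s, y)) * (pd (1,0) (pd (0,1) (Function.uncurry φ))) (s, y)).re
        + α^2*(2*((starRingEnd ℂ) ((Function.uncurry φ) (s, y)) * (pd (1,0) (Function.uncurry φ)) (s, y)).re)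
        + (1 - y^2) * (pd (1,0) (Function.uncurry v)) (s, y))
    (bound := fun _ => C) (Metric.ball_mem_nhds t one_pos)
    (Filter.Eventually.of_forall fun s => ((hFscont s).aestronglyMeasurable))
    ((hFscont t).integrableOn_Icc)
    ((hGscont t).aestronglyMeasurable)
    ?_ ?_ (Filter.Eventually.of_forall fun y s _ => hFd s y)
  rotate_left
  · refine (MeasureTheory.ae_restrict_iff' measurableSet_Icc).2
      (Filter.Eventually.of_forall fun y hy s hs => ?_)
    have hst : s ∈ Set.Icc (t - 1) (t + 1) := by
      have := abs_lt.1 (by simpa [Real.dist_eq] using Metric.mem_ball.1 hs)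
      constructor <;> linarith [this.1, this.2]
    exact hC (s, y) ⟨hst, hy⟩
  · refine MeasureTheory.integrableOn_const ?_
    rw [Real.volume_Icc]
    exact ENNReal.ofReal_ne_top
  -- the value of the derivative via the key integral identity
  have hkeyv := key_integral α ν (φ t)
    (fun y => (pd (0,1) (Function.uncurry φ)) (t, y)) (fun y => (pd (0,1) (pd (0,1) (Function.uncurry φ))) (t, y)) (fun y => (pd (0,1) (pd (0,1) (pd (0,1) (Function.uncurry φ)))) (t, y))
    (fun y => (pd (0,1) (pd (0,1) (pd (0,1) (pd (0,1) (Function.uncurry φ))))) (t, y))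
    (fun y => (pd (1,0) (Function.uncurry φ)) (t, y)) (fun y => (pd (1,0) (pd (0,1) (Function.uncurry φ))) (t, y)) (fun y => (pd (1,0) (pd (0,1) (pd (0,1) (Function.uncurry φ)))) (t, y))
    (v t) (fun y => (pd (0,1) (Function.uncurry v)) (t, y)) (fun y => (pd (0,1) (pd (0,1) (Function.uncurry v))) (t, y)) (fun y => (pd (1,0) (Function.uncurry v)) (t, y))
    (fun y => hasDerivAt_slice2 hφ t y)
    (fun y => hasDerivAt_slice2 hF1 t y)
    (fun y => hasDerivAt_slice2 hF2 t y)
    (fun y => hasDerivAt_slice2 hF3 t y)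
    ?_ ?_
    (fun y => hasDerivAt_slice2 hv t y)
    (fun y => hasDerivAt_slice2 hV1 t y)
    (hF4.continuous.comp (continuous_const.prodMk continuous_id))
    (hT2.continuous.comp (continuous_const.prodMk continuous_id))
    (hV2.continuous.comp (continuous_const.prodMk continuous_id))
    (hW1.continuous.comp (continuous_const.prodMk continuous_id))
    (hbc1 t) (hbc2 t)
    (by show pd (0,1) (Function.uncurry φ) (t, (1:ℝ)) = 0; rw [← r1 t 1]; exact hbc3 t)
    (by show pd (0,1) (Function.uncurry φ) (t, (-1:ℝ)) = 0; rw [← r1 t (-1)]; exact hbc4 t)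
    (hbdT0 t 1 (hbc1 t) hbc1) (hbdT0 t (-1) (hbc2 t) hbc2)
    (hbv1 t) (hbv2 t) (hmass t) hOS' hdiff'
  rotate_left
  · intro y
    have h := hasDerivAt_slice2 hT0 t y
    rw [← pd_swap hφ] at h
    exact h
  · intro y
    have h := hasDerivAt_slice2 hT1 t y
    rw [← pd_swap hF1] at h
    exact h
  -- rewrite the goal function as a single integral
  have hfun_eq : (fun s =>
      (∫ y in Set.Icc (-1 : ℝ) 1, (‖deriv (φ s) y‖ ^ 2 + α ^ 2 * ‖φ s y‖ ^ 2))
        + ∫ y in Set.Icc (-1 : ℝ) 1, (1 - y ^ 2) * v s y)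
      = fun s => ∫ y in Set.Icc (-1 : ℝ) 1,
        (‖(pd (0,1) (Function.uncurry φ)) (s, y)‖ ^ 2 + α ^ 2 * ‖φ s y‖ ^ 2 + (1 - y ^ 2) * v s y) := by
    funext s
    have hA : (fun y => ‖deriv (φ s) y‖ ^ 2 + α ^ 2 * ‖φ s y‖ ^ 2)
        = fun y => ‖(pd (0,1) (Function.uncurry φ)) (s, y)‖ ^ 2 + α ^ 2 * ‖φ s y‖ ^ 2 :=
      funext fun y => by rw [r1 s y]
    rw [hA]
    have hline : Continuous (fun y : ℝ => ((s, y) : ℝ × ℝ)) :=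
      continuous_const.prodMk continuous_id
    have hintA : MeasureTheory.IntegrableOn
        (fun y => ‖(pd (0,1) (Function.uncurry φ)) (s, y)‖ ^ 2 + α ^ 2 * ‖φ s y‖ ^ 2) (Set.Icc (-1:ℝ) 1) :=
      (((hF1.continuous.comp hline).norm.pow 2).add
        (continuous_const.mul ((hφ.continuous.comp hline).norm.pow 2))).integrableOn_Icc
    have hintB : MeasureTheory.IntegrableOn
        (fun y : ℝ => (1 - y ^ 2) * v s y) (Set.Icc (-1:ℝ) 1) :=
      ((continuous_const.sub ((continuous_id).pow 2)).mul
        (hv.continuous.comp hline)).integrableOn_Icc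
    exact (MeasureTheory.integral_add hintA hintB).symm
  -- rewrite the derivative value
  have hRHSeq : (fun y => ‖(pd (0,1) (pd (0,1) (Function.uncurry φ))) (t, y)‖^2 + 2*α^2*‖(pd (0,1) (Function.uncurry φ)) (t, y)‖^2 + α^4*‖φ t y‖^2)
      = fun y => (‖deriv (deriv (φ t)) y‖ ^ 2 + 2 * α ^ 2 * ‖deriv (φ t) y‖ ^ 2
        + α ^ 4 * ‖φ t y‖ ^ 2) :=
    funext fun y => by rw [r1 t y, r2 t y]
  have hkey2 : (∫ y in Set.Icc (-1:ℝ) 1,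
      (2*((starRingEnd ℂ) ((pd (0,1) (Function.uncurry φ)) (t, y)) * (pd (1,0) (pd (0,1) (Function.uncurry φ))) (t, y)).re
        + α^2*(2*((starRingEnd ℂ) ((Function.uncurry φ) (t, y)) * (pd (1,0) (Function.uncurry φ)) (t, y)).re)
        + (1 - y^2) * (pd (1,0) (Function.uncurry v)) (t, y)))
      = -(2 * ν) * ∫ y in Set.Icc (-1 : ℝ) 1,
          (‖deriv (deriv (φ t)) y‖ ^ 2 + 2 * α ^ 2 * ‖deriv (φ t) y‖ ^ 2
            + α ^ 4 * ‖φ t y‖ ^ 2) := by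
    have h1 : ∫ y in Set.Icc (-1:ℝ) 1,
        (2*((starRingEnd ℂ) ((pd (0,1) (Function.uncurry φ)) (t, y)) * (pd (1,0) (pd (0,1) (Function.uncurry φ))) (t, y)).re
          + α^2*(2*((starRingEnd ℂ) ((Function.uncurry φ) (t, y)) * (pd (1,0) (Function.uncurry φ)) (t, y)).re)
          + (1 - y^2) * (pd (1,0) (Function.uncurry v)) (t, y))
        = -(2*ν) * ∫ y in Set.Icc (-1:ℝ) 1,
          (‖(pd (0,1) (pd (0,1) (Function.uncurry φ))) (t, y)‖^2 + 2*α^2*‖(pd (0,1) (Function.uncurry φ)) (t, y)‖^2 + α^4*‖φ t y‖^2) := hkeyv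
    rw [h1, hRHSeq]
  constructor
  · rw [hfun_eq, ← hkey2]
    exact hDUI.2
  · have h0 : 0 ≤ ∫ y in Set.Icc (-1 : ℝ) 1,
        (‖deriv (deriv (φ t)) y‖ ^ 2 + 2 * α ^ 2 * ‖deriv (φ t) y‖ ^ 2
          + α ^ 4 * ‖φ t y‖ ^ 2) := by
      apply MeasureTheory.integral_nonneg
      intro y
      positivity
    have h1 : 0 ≤ 2 * ν := by linarith
    nlinarith
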